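/- Let 2/3 < c < 1. Then there exists a constant C = C(c) > 0 such that for all real numbers a₁, a₂, a₃ and τ, ∫_ℝ ∫_ℝ ⟨τ₁ − a₁⟩^{−c} ⟨τ₂ − a₂⟩^{−c} ⟨τ − τ₁ + τ₂ − a₃⟩^{−c} dτ₁ dτ₂ ≤ C ⟨τ − a₁ + a₂ − a₃⟩^{−(3c − 2)}. -/

import Mathlib

/-!
Write `Y = ⟨b - a⟩`. If `|x - a| ≤ |x - b|` then `⟨x - b⟩ ≥ max(⟨x - a⟩, Y) / 2`, and
symmetrically otherwise, so `⟨x - a⟩^{-p} ⟨x - b⟩^{-q}` is dominated by translates of the weight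
`⟨x⟩^{-p} max(⟨x⟩, Y)^{-q}`. For `p < 1 < p + q` the part `|x| ≤ Y` of its integral is
`≲ Y^{-q} Y^{1-p}` and the tail is `≲ Y^{1-p-q}`, giving
`∫ ⟨x - a⟩^{-p} ⟨x - b⟩^{-q} dx ≲ ⟨b - a⟩^{-(p+q-1)}` when `p, q < 1 < p + q`.
Integrating first in `τ₂` with `p = q = c` leaves `⟨τ₁ - (τ + a₂ - a₃)⟩^{-(2c-1)}`, and
integrating that in `τ₁` with `p = c`, `q = 2c - 1` produces the exponent `3c - 2`;
`2/3 < c < 1` is exactly what makes both steps admissible.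
-/

open MeasureTheory Real Set

/-- The Japanese bracket `⟨x⟩ = (1 + x²)^{1/2}`. -/
noncomputable def jpn (x : ℝ) : ℝ := Real.sqrt (1 + x ^ 2)

lemma jpn_pos (x : ℝ) : 0 < jpn x := Real.sqrt_pos.2 (by positivity)

lemma jpn_rpow_nonneg (x s : ℝ) : 0 ≤ jpn x ^ s := Real.rpow_nonneg (jpn_pos x).le s

lemma jpn_abs (x : ℝ) : jpn |x| = jpn x := by simp [jpn]

lemma jpn_sub_comm (x y : ℝ) : jpn (x - y) = jpn (y - x) := by
  rw [← jpn_abs, abs_sub_comm, jpn_abs]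

lemma abs_le_jpn (x : ℝ) : |x| ≤ jpn x := by
  rw [jpn, ← Real.sqrt_sq_eq_abs]
  exact Real.sqrt_le_sqrt (by linarith)

lemma jpn_le_jpn {u w : ℝ} (h : |w| ≤ |u|) : jpn w ≤ jpn u := by
  unfold jpn
  exact Real.sqrt_le_sqrt (by linarith [sq_le_sq.2 h])

lemma jpn_le_two_mul_jpn {u w : ℝ} (h : |w| ≤ 2 * |u|) : jpn w ≤ 2 * jpn u := by
  rw [jpn, jpn, show (2 : ℝ) = Real.sqrt (2 ^ 2) by simp, ← Real.sqrt_mul (by positivity)]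
  exact Real.sqrt_le_sqrt (by nlinarith [sq_abs w, sq_abs u, abs_nonneg w])

lemma continuous_jpn : Continuous jpn := Real.continuous_sqrt.comp (by fun_prop)

lemma continuous_jpn_rpow (s : ℝ) : Continuous fun x => jpn x ^ s :=
  continuous_jpn.rpow_const fun x => Or.inl (jpn_pos x).ne'

lemma integrable_jpn_rpow_neg {m : ℝ} (hm : 1 < m) : Integrable fun x => jpn x ^ (-m) := by
  refine (integrable_rpow_neg_one_add_norm_sq (E := ℝ) (μ := volume) (by simpa using hm)).congr
    (ae_of_all _ fun x => ?_)
  dsimp only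
  rw [jpn, Real.sqrt_eq_rpow, ← Real.rpow_mul (by positivity), Real.norm_eq_abs, sq_abs]
  ring_nf

lemma rpow_neg_le_two_rpow_mul {u M s : ℝ} (hM : 0 < M) (h : M ≤ 2 * u) (hs : 0 ≤ s) :
    u ^ (-s) ≤ 2 ^ s * M ^ (-s) := by
  calc u ^ (-s) ≤ (M / 2) ^ (-s) :=
        Real.rpow_le_rpow_of_nonpos (by positivity) (by linarith) (neg_nonpos.2 hs)
    _ = 2 ^ s * M ^ (-s) := by
        rw [Real.div_rpow hM.le zero_le_two, Real.rpow_neg zero_le_two, div_inv_eq_mul, mul_comm]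

noncomputable def bracketWeight (p q Y x : ℝ) : ℝ := jpn x ^ (-p) * max (jpn x) Y ^ (-q)

section BracketWeight

variable {p q Y : ℝ}

lemma bracketWeight_nonneg (hY : 0 ≤ Y) (x : ℝ) : 0 ≤ bracketWeight p q Y x :=
  mul_nonneg (jpn_rpow_nonneg _ _) (Real.rpow_nonneg (hY.trans (le_max_right _ _)) _)

lemma bracketWeight_le (hq : 0 ≤ q) (x : ℝ) : bracketWeight p q Y x ≤ jpn x ^ (-(p + q)) := by
  rw [bracketWeight, neg_add, Real.rpow_add (jpn_pos x)]
  exact mul_le_mul_of_nonneg_left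
    (Real.rpow_le_rpow_of_nonpos (jpn_pos x) (le_max_left _ _) (neg_nonpos.2 hq))
    (jpn_rpow_nonneg x _)

lemma integrable_bracketWeight (hq : 0 ≤ q) (hpq : 1 < p + q) (hY : 0 < Y) :
    Integrable (bracketWeight p q Y) := by
  refine (integrable_jpn_rpow_neg hpq).mono' ?_ (ae_of_all _ fun x => ?_)
  · exact ((continuous_jpn_rpow _).mul ((continuous_jpn.max continuous_const).rpow_const
      fun x => Or.inl (hY.trans_le (le_max_right _ _)).ne')).aestronglyMeasurable
  · rw [Real.norm_of_nonneg (bracketWeight_nonneg hY.le x)]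
    exact bracketWeight_le hq x

lemma integral_bracketWeight_le (hp₀ : 0 ≤ p) (hp₁ : p < 1) (hq : 0 ≤ q)
    (hpq : 1 < p + q) (hY : 0 < Y) :
    ∫ x, bracketWeight p q Y x ≤ 2 * (1 / (1 - p) + 1 / (p + q - 1)) * Y ^ (-(p + q - 1)) := by
  set g := bracketWeight p q Y
  have hg := integrable_bracketWeight hq hpq hY
  have hnear : ∀ x ∈ Ioc 0 Y, g x ≤ Y ^ (-q) * x ^ (-p) := fun x hx => by
    rw [mul_comm]
    exact mul_le_mul
      (Real.rpow_le_rpow_of_nonpos hx.1 ((le_abs_self x).trans (abs_le_jpn x)) (by linarith))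
      (Real.rpow_le_rpow_of_nonpos hY (le_max_right _ _) (by linarith))
      (Real.rpow_nonneg (hY.le.trans (le_max_right _ _)) _) (Real.rpow_nonneg hx.1.le _)
  have hfar : ∀ x ∈ Ioi Y, g x ≤ x ^ (-(p + q)) := fun x hx =>
    (bracketWeight_le hq x).trans (Real.rpow_le_rpow_of_nonpos (hY.trans hx)
      ((le_abs_self x).trans (abs_le_jpn x)) (by linarith))
  have hnear_int : IntegrableOn (fun x : ℝ => Y ^ (-q) * x ^ (-p)) (Ioc 0 Y) :=
    (intervalIntegral.intervalIntegrable_rpow' (a := 0) (b := Y) (by linarith)).1.const_mul _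
  calc ∫ x, g x = 2 * ∫ x in Ioi 0, g x := by
        rw [← integral_comp_abs]
        simp only [g, bracketWeight, jpn_abs]
    _ = 2 * ((∫ x in Ioc 0 Y, g x) + ∫ x in Ioi Y, g x) := by
        rw [← Ioc_union_Ioi_eq_Ioi hY.le,
          setIntegral_union Ioc_disjoint_Ioi_same measurableSet_Ioi hg.integrableOn hg.integrableOn]
    _ ≤ 2 * ((∫ x in Ioc 0 Y, Y ^ (-q) * x ^ (-p)) + ∫ x in Ioi Y, x ^ (-(p + q))) := by
        gcongr 2 * (?_ + ?_)
        · exact setIntegral_mono_on hg.integrableOn hnear_int measurableSet_Ioc hnear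
        · exact setIntegral_mono_on hg.integrableOn
            (integrableOn_Ioi_rpow_of_lt (by linarith) hY) measurableSet_Ioi hfar
    _ = 2 * (Y ^ (-q) * Y ^ (1 - p) / (1 - p) + Y ^ (-(p + q - 1)) / (p + q - 1)) := by
        rw [integral_const_mul, ← intervalIntegral.integral_of_le hY.le,
          integral_rpow (Or.inl (by linarith)), integral_Ioi_rpow_of_lt (by linarith) hY,
          Real.zero_rpow (by linarith), show -(p + q) + 1 = -(p + q - 1) by ring, neg_div_neg_eq,
          show -p + 1 = 1 - p by ring, sub_zero, mul_div_assoc]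
    _ = 2 * (1 / (1 - p) + 1 / (p + q - 1)) * Y ^ (-(p + q - 1)) := by
        rw [← Real.rpow_add hY, show -q + (1 - p) = -(p + q - 1) by ring]
        ring

end BracketWeight

section Convolution

variable {p q : ℝ}

lemma jpn_rpow_mul_jpn_rpow_le_of_abs_le (hq : 0 ≤ q) {a b x : ℝ} (h : |x - a| ≤ |x - b|) :
    jpn (x - a) ^ (-p) * jpn (x - b) ^ (-q)
      ≤ 2 ^ q * bracketWeight p q (jpn (b - a)) (x - a) := by
  have hmax : max (jpn (x - a)) (jpn (b - a)) ≤ 2 * jpn (x - b) := by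
    refine max_le (by linarith [jpn_le_jpn h, jpn_pos (x - b)]) (jpn_le_two_mul_jpn ?_)
    calc |b - a| ≤ |b - x| + |x - a| := abs_sub_le b x a
      _ = |x - b| + |x - a| := by rw [abs_sub_comm b x]
      _ ≤ 2 * |x - b| := by linarith
  rw [bracketWeight, mul_left_comm]
  exact mul_le_mul_of_nonneg_left
    (rpow_neg_le_two_rpow_mul ((jpn_pos _).trans_le (le_max_left _ _)) hmax hq)
    (jpn_rpow_nonneg _ _)

lemma jpn_rpow_mul_jpn_rpow_le (hp : 0 ≤ p) (hq : 0 ≤ q) (a b x : ℝ) :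
    jpn (x - a) ^ (-p) * jpn (x - b) ^ (-q)
      ≤ 2 ^ q * bracketWeight p q (jpn (b - a)) (x - a)
        + 2 ^ p * bracketWeight q p (jpn (b - a)) (x - b) := by
  have hnonneg : ∀ s t u : ℝ, 0 ≤ (2 : ℝ) ^ t * bracketWeight s t (jpn (b - a)) u :=
    fun s t u => mul_nonneg (by positivity) (bracketWeight_nonneg (jpn_pos _).le u)
  rcases le_total |x - a| |x - b| with h | h
  · linarith [jpn_rpow_mul_jpn_rpow_le_of_abs_le (p := p) hq h, hnonneg q p (x - b)]
  · have h' := jpn_rpow_mul_jpn_rpow_le_of_abs_le (p := q) hp h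
    rw [mul_comm, jpn_sub_comm a b] at h'
    linarith [hnonneg p q (x - a)]

lemma integrable_bracketWeight_add_bracketWeight (hp : 0 ≤ p) (hq : 0 ≤ q) (hpq : 1 < p + q)
    (a b : ℝ) :
    Integrable fun x => 2 ^ q * bracketWeight p q (jpn (b - a)) (x - a)
      + 2 ^ p * bracketWeight q p (jpn (b - a)) (x - b) :=
  (((integrable_bracketWeight hq hpq (jpn_pos _)).comp_sub_right a).const_mul _).add
    (((integrable_bracketWeight hp (by linarith) (jpn_pos _)).comp_sub_right b).const_mul _)

lemma integrable_jpn_rpow_mul_jpn_rpow (hp : 0 ≤ p) (hq : 0 ≤ q) (hpq : 1 < p + q) (a b : ℝ) :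
    Integrable fun x => jpn (x - a) ^ (-p) * jpn (x - b) ^ (-q) := by
  refine (integrable_bracketWeight_add_bracketWeight hp hq hpq a b).mono' ?_
    (ae_of_all _ fun x => ?_)
  · exact (((continuous_jpn_rpow _).comp (continuous_sub_right a)).mul
      ((continuous_jpn_rpow _).comp (continuous_sub_right b))).aestronglyMeasurable
  · rw [Real.norm_of_nonneg (mul_nonneg (jpn_rpow_nonneg _ _) (jpn_rpow_nonneg _ _))]
    exact jpn_rpow_mul_jpn_rpow_le hp hq a b x

lemma exists_integral_jpn_rpow_mul_jpn_rpow_le (hp₀ : 0 ≤ p) (hp₁ : p < 1) (hq₀ : 0 ≤ q)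
    (hq₁ : q < 1) (hpq : 1 < p + q) :
    ∃ C, 0 < C ∧ ∀ a b : ℝ,
      ∫ x, jpn (x - a) ^ (-p) * jpn (x - b) ^ (-q) ≤ C * jpn (b - a) ^ (-(p + q - 1)) := by
  have hK : ∀ s t : ℝ, s < 1 → 1 < s + t → 0 < 2 * (1 / (1 - s) + 1 / (s + t - 1)) :=
    fun s t hs hst => by
      have := one_div_pos.2 (sub_pos.2 hs)
      have := one_div_pos.2 (sub_pos.2 hst)
      positivity
  refine ⟨2 ^ q * (2 * (1 / (1 - p) + 1 / (p + q - 1)))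
      + 2 ^ p * (2 * (1 / (1 - q) + 1 / (q + p - 1))),
    by have := hK p q hp₁ hpq; have := hK q p hq₁ (by linarith); positivity,
    fun a b => ?_⟩
  calc ∫ x, jpn (x - a) ^ (-p) * jpn (x - b) ^ (-q)
      ≤ ∫ x, (2 ^ q * bracketWeight p q (jpn (b - a)) (x - a)
          + 2 ^ p * bracketWeight q p (jpn (b - a)) (x - b)) :=
        integral_mono_of_nonneg
          (ae_of_all _ fun x => mul_nonneg (jpn_rpow_nonneg _ _) (jpn_rpow_nonneg _ _))
          (integrable_bracketWeight_add_bracketWeight hp₀ hq₀ hpq a b)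
          (ae_of_all _ (jpn_rpow_mul_jpn_rpow_le hp₀ hq₀ a b))
    _ = (2 ^ q * ∫ x, bracketWeight p q (jpn (b - a)) x)
          + 2 ^ p * ∫ x, bracketWeight q p (jpn (b - a)) x := by
        have hpq' : 1 < q + p := by linarith
        rw [integral_add
          (((integrable_bracketWeight hq₀ hpq (jpn_pos _)).comp_sub_right a).const_mul _)
          (((integrable_bracketWeight hp₀ hpq' (jpn_pos _)).comp_sub_right b).const_mul _),
          integral_const_mul, integral_const_mul, integral_sub_right_eq_self,
          integral_sub_right_eq_self]
    _ ≤ 2 ^ q * (2 * (1 / (1 - p) + 1 / (p + q - 1)) * jpn (b - a) ^ (-(p + q - 1)))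
          + 2 ^ p * (2 * (1 / (1 - q) + 1 / (q + p - 1)) * jpn (b - a) ^ (-(q + p - 1))) := by
        gcongr
        · exact integral_bracketWeight_le hp₀ hp₁ hq₀ hpq (jpn_pos _)
        · exact integral_bracketWeight_le hq₀ hq₁ hp₀ (by linarith) (jpn_pos _)
    _ = _ := by rw [add_comm q p]; ring

end Convolution

/-- Double convolution estimate: for `2/3 < c < 1`,
`∫∫ ⟨τ₁ - a₁⟩^{-c} ⟨τ₂ - a₂⟩^{-c} ⟨τ - τ₁ + τ₂ - a₃⟩^{-c} dτ₁ dτ₂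
  ≤ C ⟨τ - a₁ + a₂ - a₃⟩^{-(3c - 2)}`. -/
theorem double_convolution_bracket (c : ℝ) (hc1 : 2 / 3 < c) (hc2 : c < 1) :
    ∃ C : ℝ, 0 < C ∧ ∀ a₁ a₂ a₃ τ : ℝ,
      (∫ τ₁ : ℝ, ∫ τ₂ : ℝ,
          jpn (τ₁ - a₁) ^ (-c) * jpn (τ₂ - a₂) ^ (-c)
            * jpn (τ - τ₁ + τ₂ - a₃) ^ (-c))
        ≤ C * jpn (τ - a₁ + a₂ - a₃) ^ (-(3 * c - 2)) := by
  have hc0 : 0 ≤ c := by linarith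
  have hq0 : 0 ≤ 2 * c - 1 := by linarith
  obtain ⟨C₁, hC₁, h₁⟩ := exists_integral_jpn_rpow_mul_jpn_rpow_le hc0 hc2 hc0 hc2
    (by linarith)
  obtain ⟨C₂, hC₂, h₂⟩ := exists_integral_jpn_rpow_mul_jpn_rpow_le hc0 hc2 hq0
    (by linarith) (by linarith)
  refine ⟨C₁ * C₂, mul_pos hC₁ hC₂, fun a₁ a₂ a₃ τ => ?_⟩
  set s := τ + a₂ - a₃
  have hinner : ∀ τ₁, ∫ τ₂, jpn (τ₁ - a₁) ^ (-c) * jpn (τ₂ - a₂) ^ (-c)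
        * jpn (τ - τ₁ + τ₂ - a₃) ^ (-c)
      ≤ C₁ * (jpn (τ₁ - a₁) ^ (-c) * jpn (τ₁ - s) ^ (-(2 * c - 1))) := fun τ₁ => by
    have h := h₁ a₂ (τ₁ + a₃ - τ)
    rw [show τ₁ + a₃ - τ - a₂ = τ₁ - s by ring, show c + c - 1 = 2 * c - 1 by ring] at h
    simp_rw [mul_assoc, show ∀ τ₂, τ - τ₁ + τ₂ - a₃ = τ₂ - (τ₁ + a₃ - τ) from fun τ₂ => by ring]
    rw [integral_const_mul, mul_left_comm]
    exact mul_le_mul_of_nonneg_left h (jpn_rpow_nonneg _ _)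
  calc _ ≤ ∫ τ₁, C₁ * (jpn (τ₁ - a₁) ^ (-c) * jpn (τ₁ - s) ^ (-(2 * c - 1))) :=
        integral_mono_of_nonneg
          (ae_of_all _ fun τ₁ => integral_nonneg fun τ₂ => mul_nonneg
            (mul_nonneg (jpn_rpow_nonneg _ _) (jpn_rpow_nonneg _ _)) (jpn_rpow_nonneg _ _))
          ((integrable_jpn_rpow_mul_jpn_rpow hc0 hq0 (by linarith) _ _).const_mul _)
          (ae_of_all _ hinner)
    _ ≤ C₁ * (C₂ * jpn (s - a₁) ^ (-(c + (2 * c - 1) - 1))) := by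
        rw [integral_const_mul]
        exact mul_le_mul_of_nonneg_left (h₂ _ _) hC₁.le
    _ = C₁ * C₂ * jpn (τ - a₁ + a₂ - a₃) ^ (-(3 * c - 2)) := by
        rw [show s - a₁ = τ - a₁ + a₂ - a₃ by ring, show c + (2 * c - 1) - 1 = 3 * c - 2 by ring,
          mul_assoc]
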